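/- Let Λ ∈ ℝ^n be a vector of pairwise distinct nonnegative entries. For each pair (i,j) with i ≠ j, the 2×2 linear system with matrix [[Λ_j, −Λ_i], [−Λ_i, Λ_j]] is invertible (its determinant Λ_j² − Λ_i² is nonzero), and the unique solution of [[Λ_j, −Λ_i], [−Λ_i, Λ_j]] (a, b)^T = (−c, −d)^T is a = −(Λ_j c + Λ_i d)/(Λ_j² − Λ_i²), b = −(Λ_i c + Λ_j d)/(Λ_j² − Λ_i²). Consequently, given z̄ ∈ ℝ^{n×n}, there exist unique antisymmetric matrices ι_V, ι_U ∈ ℝ^{n×n} and a unique vector ζ_Λ ∈ ℝ^n such that ι_V diag(Λ) + diag(Λ) ι_U^* + diag(ζ_Λ) = −z̄. -/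

import Mathlib

open Matrix

/-!
Reading the equation `V * diagonal Λ + diagonal Λ * Uᵀ + diagonal ζ = -z` entrywise, antisymmetry
of `V` and `U` kills their diagonals, so the diagonal entries give `ζ i = -z i i`, while for
`i ≠ j` the `(i, j)` and `(j, i)` entries form the 2×2 system
`Λ j * V i j - Λ i * U i j = -z i j`, `-Λ i * V i j + Λ j * U i j = -z j i`, whose determinant
`Λ j ^ 2 - Λ i ^ 2` is nonzero for distinct nonnegative `Λ i`, `Λ j`.
-/

theorem sq_sub_sq_ne_zero_of_ne {R : Type*} [CommRing R] [LinearOrder R] [IsStrictOrderedRing R]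
    {a b : R} (ha : 0 ≤ a) (hb : 0 ≤ b) (hab : a ≠ b) : b ^ 2 - a ^ 2 ≠ 0 :=
  sub_ne_zero.mpr fun h => hab ((sq_eq_sq₀ ha hb).mp h.symm)

theorem two_by_two_system_iff {K : Type*} [Field K] {p q : K} (hdet : q ^ 2 - p ^ 2 ≠ 0)
    (c d a b : K) :
    (q * a - p * b = -c ∧ -p * a + q * b = -d) ↔
      (a = -(q * c + p * d) / (q ^ 2 - p ^ 2) ∧ b = -(p * c + q * d) / (q ^ 2 - p ^ 2)) := by
  constructor
  · rintro ⟨h₁, h₂⟩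
    constructor
    · rw [eq_div_iff hdet]; linear_combination q * h₁ + p * h₂
    · rw [eq_div_iff hdet]; linear_combination p * h₁ + q * h₂
  · rintro ⟨rfl, rfl⟩
    constructor <;> field_simp <;> ring

theorem diag_eq_zero_of_transpose_eq_neg {ι K : Type*} [Ring K] [NoZeroDivisors K] [CharZero K]
    {W : Matrix ι ι K} (hW : Wᵀ = -W) (i : ι) : W i i = 0 :=
  CharZero.eq_neg_self_iff.mp (congr_fun₂ hW i i)

namespace DiagonalSylvester

variable {ι K : Type*} [Field K] [DecidableEq ι]

/-- The paper's `ι_V`; `solU` is its `ι_U`. -/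
def solV (Λ : ι → K) (z : Matrix ι ι K) : Matrix ι ι K :=
  of fun i j => if i = j then 0 else -(Λ j * z i j + Λ i * z j i) / (Λ j ^ 2 - Λ i ^ 2)

def solU (Λ : ι → K) (z : Matrix ι ι K) : Matrix ι ι K :=
  of fun i j => if i = j then 0 else -(Λ i * z i j + Λ j * z j i) / (Λ j ^ 2 - Λ i ^ 2)

theorem solV_transpose (Λ : ι → K) (z : Matrix ι ι K) : (solV Λ z)ᵀ = -solV Λ z := by
  ext i j
  by_cases hij : i = j
  · simp [solV, hij]
  · simp only [solV, transpose_apply, Matrix.neg_apply, of_apply, if_neg hij, if_neg (Ne.symm hij)]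
    rw [← neg_sub, div_neg]
    ring

theorem solU_transpose (Λ : ι → K) (z : Matrix ι ι K) : (solU Λ z)ᵀ = -solU Λ z := by
  ext i j
  by_cases hij : i = j
  · simp [solU, hij]
  · simp only [solU, transpose_apply, Matrix.neg_apply, of_apply, if_neg hij, if_neg (Ne.symm hij)]
    rw [← neg_sub, div_neg]
    ring

variable [CharZero K] {Λ : ι → K} {z W X : Matrix ι ι K} {ζ : ι → K}

theorem forall_iff_eq_solV_and_eq_solU (hdet : ∀ i j, i ≠ j → Λ j ^ 2 - Λ i ^ 2 ≠ 0)
    (hW : Wᵀ = -W) (hX : Xᵀ = -X) :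
    (∀ i j, i ≠ j → Λ j * W i j - Λ i * X i j = -z i j) ↔ W = solV Λ z ∧ X = solU Λ z := by
  constructor
  · intro hoff
    have hsol : ∀ i j, i ≠ j →
        W i j = -(Λ j * z i j + Λ i * z j i) / (Λ j ^ 2 - Λ i ^ 2) ∧
          X i j = -(Λ i * z i j + Λ j * z j i) / (Λ j ^ 2 - Λ i ^ 2) := fun i j hij => by
      refine (two_by_two_system_iff (hdet i j hij) _ _ _ _).mp ⟨hoff i j hij, ?_⟩
      have hji := hoff j i (Ne.symm hij)
      rw [← transpose_apply W, ← transpose_apply X, hW, hX, Matrix.neg_apply,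
        Matrix.neg_apply] at hji
      linear_combination hji
    constructor <;> ext i j <;> by_cases hij : i = j
    · simp [solV, hij, diag_eq_zero_of_transpose_eq_neg hW]
    · simp [solV, hij, (hsol i j hij).1]
    · simp [solU, hij, diag_eq_zero_of_transpose_eq_neg hX]
    · simp [solU, hij, (hsol i j hij).2]
  · rintro ⟨rfl, rfl⟩ i j hij
    refine ((two_by_two_system_iff (hdet i j hij) (z i j) (z j i) _ _).mpr ⟨?_, ?_⟩).1 <;>
      simp [solV, solU, hij]

variable [Fintype ι]

theorem eq_neg_iff_forall (hW : Wᵀ = -W) (hX : Xᵀ = -X) :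
    W * diagonal Λ + diagonal Λ * Xᵀ + diagonal ζ = -z ↔
      (∀ i j, i ≠ j → Λ j * W i j - Λ i * X i j = -z i j) ∧ ∀ i, ζ i = -z i i := by
  have hX' : ∀ i j, X j i = -X i j := fun i j => congr_fun₂ hX i j
  simp only [← Matrix.ext_iff, Matrix.add_apply, mul_diagonal, diagonal_mul, transpose_apply,
    Matrix.neg_apply]
  constructor
  · intro h
    refine ⟨fun i j hij => ?_, fun i => ?_⟩
    · have := h i j
      rw [diagonal_apply_ne _ hij, hX'] at this
      linear_combination this
    · simpa [diag_eq_zero_of_transpose_eq_neg hW, diag_eq_zero_of_transpose_eq_neg hX] using h i i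
  · rintro ⟨hoff, hdiag⟩ i j
    by_cases hij : i = j
    · subst hij
      simp [diag_eq_zero_of_transpose_eq_neg hW, diag_eq_zero_of_transpose_eq_neg hX, hdiag]
    · rw [diagonal_apply_ne _ hij, hX']
      linear_combination hoff i j hij

theorem eq_neg_iff_eq_sol (hdet : ∀ i j, i ≠ j → Λ j ^ 2 - Λ i ^ 2 ≠ 0)
    (hW : Wᵀ = -W) (hX : Xᵀ = -X) :
    W * diagonal Λ + diagonal Λ * Xᵀ + diagonal ζ = -z ↔
      W = solV Λ z ∧ X = solU Λ z ∧ ζ = fun i => -z i i := by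
  rw [eq_neg_iff_forall hW hX, forall_iff_eq_solV_and_eq_solU hdet hW hX, funext_iff, and_assoc]

theorem existsUnique (hdet : ∀ i j, i ≠ j → Λ j ^ 2 - Λ i ^ 2 ≠ 0) (z : Matrix ι ι K) :
    ∃! p : Matrix ι ι K × Matrix ι ι K × (ι → K),
      p.1ᵀ = -p.1 ∧ p.2.1ᵀ = -p.2.1 ∧
        p.1 * diagonal Λ + diagonal Λ * p.2.1ᵀ + diagonal p.2.2 = -z := by
  refine ⟨(solV Λ z, solU Λ z, fun i => -z i i),
    ⟨solV_transpose Λ z, solU_transpose Λ z,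
      (eq_neg_iff_eq_sol hdet (solV_transpose Λ z) (solU_transpose Λ z)).mpr ⟨rfl, rfl, rfl⟩⟩, ?_⟩
  rintro ⟨W, X, ζ⟩ ⟨hW, hX, h⟩
  obtain ⟨rfl, rfl, rfl⟩ := (eq_neg_iff_eq_sol hdet hW hX).mp h
  rfl

end DiagonalSylvester

theorem two_by_two_systems_unique_solution {n : ℕ}
    (Λ : Fin n → ℝ) (hpos : ∀ i, 0 ≤ Λ i)
    (hdist : ∀ i j : Fin n, i ≠ j → Λ i ≠ Λ j) :
    (∀ i j : Fin n, i ≠ j → Λ j ^ 2 - Λ i ^ 2 ≠ 0) ∧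
      (∀ i j : Fin n, i ≠ j → ∀ c d a b : ℝ,
        (Λ j * a - Λ i * b = -c ∧ -(Λ i) * a + Λ j * b = -d) ↔
          (a = -(Λ j * c + Λ i * d) / (Λ j ^ 2 - Λ i ^ 2) ∧
            b = -(Λ i * c + Λ j * d) / (Λ j ^ 2 - Λ i ^ 2))) ∧
      ∀ zb : Matrix (Fin n) (Fin n) ℝ,
        ∃! p : Matrix (Fin n) (Fin n) ℝ × Matrix (Fin n) (Fin n) ℝ × (Fin n → ℝ),
          p.1ᵀ = -p.1 ∧ p.2.1ᵀ = -p.2.1 ∧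
            p.1 * Matrix.diagonal Λ + Matrix.diagonal Λ * p.2.1ᵀ
              + Matrix.diagonal p.2.2 = -zb := by
  have hdet : ∀ i j : Fin n, i ≠ j → Λ j ^ 2 - Λ i ^ 2 ≠ 0 := fun i j hij =>
    sq_sub_sq_ne_zero_of_ne (hpos i) (hpos j) (hdist i j hij)
  exact ⟨hdet, fun i j hij => two_by_two_system_iff (hdet i j hij),
    DiagonalSylvester.existsUnique hdet⟩
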